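/- Assume d·γ ≤ 2·γ*. There exists c > 0, depending only on ℓ, α, m, d, J, γ, γ*, such that for every λ ∈ ℝ and every solution (u, v, w, z) of the resolvent system with data (f₁, f₂, f₄): |w|² + |z|² ≤ c·‖F‖·‖U‖. -/

import Mathlib

open MeasureTheory ComplexConjugate

/-- A solution `(λ, u, v, w, z)` (with `w = v 0`, `z = v1 0`) of the resolvent system of the
hybrid Euler–Bernoulli beam with tip body, with data `(f₁, f₂, f₄)`. The fields `u1,…,u4`
(resp. `v1, v2`, `f1d, f1dd`) are the successive derivatives of `u` (resp. `v`, `f1`)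
on `[0,ℓ]`. -/
structure ResolventSol (ℓ α m d J γ γs : ℝ) where
  lam : ℝ
  u : ℝ → ℂ
  u1 : ℝ → ℂ
  u2 : ℝ → ℂ
  u3 : ℝ → ℂ
  u4 : ℝ → ℂ
  v : ℝ → ℂ
  v1 : ℝ → ℂ
  v2 : ℝ → ℂ
  f1 : ℝ → ℂ
  f1d : ℝ → ℂ
  f1dd : ℝ → ℂ
  f2 : ℝ → ℂ
  f41 : ℂ
  f42 : ℂ
  hu1 : ∀ x ∈ Set.Icc (0:ℝ) ℓ, HasDerivWithinAt u (u1 x) (Set.Icc 0 ℓ) x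
  hu2 : ∀ x ∈ Set.Icc (0:ℝ) ℓ, HasDerivWithinAt u1 (u2 x) (Set.Icc 0 ℓ) x
  hu3 : ∀ x ∈ Set.Icc (0:ℝ) ℓ, HasDerivWithinAt u2 (u3 x) (Set.Icc 0 ℓ) x
  hu4 : ∀ x ∈ Set.Icc (0:ℝ) ℓ, HasDerivWithinAt u3 (u4 x) (Set.Icc 0 ℓ) x
  hu4c : ContinuousOn u4 (Set.Icc 0 ℓ)
  hv1 : ∀ x ∈ Set.Icc (0:ℝ) ℓ, HasDerivWithinAt v (v1 x) (Set.Icc 0 ℓ) x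
  hv2 : ∀ x ∈ Set.Icc (0:ℝ) ℓ, HasDerivWithinAt v1 (v2 x) (Set.Icc 0 ℓ) x
  hv2c : ContinuousOn v2 (Set.Icc 0 ℓ)
  hf11 : ∀ x ∈ Set.Icc (0:ℝ) ℓ, HasDerivWithinAt f1 (f1d x) (Set.Icc 0 ℓ) x
  hf12 : ∀ x ∈ Set.Icc (0:ℝ) ℓ, HasDerivWithinAt f1d (f1dd x) (Set.Icc 0 ℓ) x
  hf1c : ContinuousOn f1dd (Set.Icc 0 ℓ)
  hf2c : ContinuousOn f2 (Set.Icc 0 ℓ)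
  res1 : ∀ x ∈ Set.Icc (0:ℝ) ℓ, Complex.I * (lam : ℂ) * u x - v x = f1 x
  res2 : ∀ x ∈ Set.Icc (0:ℝ) ℓ, Complex.I * (lam : ℂ) * v x + (α : ℂ) * u4 x = f2 x
  res3 : Complex.I * (lam : ℂ) * ((m : ℂ) * v 0 + (m : ℂ) * (d : ℂ) * v1 0) +
      (γ : ℂ) * v 0 + (α : ℂ) * u3 0 = (m : ℂ) * f41 + (m : ℂ) * (d : ℂ) * f42
  res4 : Complex.I * (lam : ℂ) * ((m : ℂ) * (d : ℂ) * v 0 +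
        ((J : ℂ) + (m : ℂ) * (d : ℂ) ^ 2) * v1 0) +
      (d : ℂ) * (γ : ℂ) * v 0 + (d : ℂ) * (γs : ℂ) * v1 0 - (α : ℂ) * u2 0 =
      (m : ℂ) * (d : ℂ) * f41 + ((J : ℂ) + (m : ℂ) * (d : ℂ) ^ 2) * f42
  bcu : u ℓ = 0
  bcu1 : u1 ℓ = 0
  bcv : v ℓ = 0
  bcv1 : v1 ℓ = 0

variable {ℓ α m d J γ γs : ℝ}

/-- The phase-space norm `‖U‖` of a resolvent solution. -/
noncomputable def normU (R : ResolventSol ℓ α m d J γ γs) : ℝ :=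
  Real.sqrt ((∫ x in (0:ℝ)..ℓ, (‖R.v x‖ ^ 2 + α * ‖R.u2 x‖ ^ 2)) +
    m * ‖R.v 0‖ ^ 2 + 2 * m * d * (R.v 0 * conj (R.v1 0)).re +
    (J + m * d ^ 2) * ‖R.v1 0‖ ^ 2)

/-- The phase-space norm `‖F‖` of the data of a resolvent solution. -/
noncomputable def normF (R : ResolventSol ℓ α m d J γ γs) : ℝ :=
  Real.sqrt ((∫ x in (0:ℝ)..ℓ, (‖R.f2 x‖ ^ 2 + α * ‖R.f1dd x‖ ^ 2)) +
    m * ‖R.f41‖ ^ 2 + 2 * m * d * (R.f41 * conj R.f42).re +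
    (J + m * d ^ 2) * ‖R.f42‖ ^ 2)

/-!
Pairing the resolvent equations with `U` in the energy inner product and integrating by parts
twice gives the dissipation identity `Re ⟨F, U⟩ = γ |w|² + d γ Re (w z̄) + d γ* |z|²`. When
`d γ ≤ 2 γ*` the right-hand side dominates a multiple of `|w|² + |z|²`, while Cauchy–Schwarz bounds
the left-hand side by `‖F‖ ‖U‖`.
-/

open Set

theorem le_sqrt_mul_sqrt_of_forall_quadratic_nonneg {A B C : ℝ}
    (h : ∀ t : ℝ, 0 ≤ A * (t * t) + 2 * B * t + C) : B ≤ √A * √C := by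
  have hC : 0 ≤ C := by simpa using h 0
  have hB : B ^ 2 ≤ A * C := by
    have := discrim_le_zero h
    rw [discrim] at this
    linarith
  calc B ≤ |B| := le_abs_self B
    _ = √(B ^ 2) := (Real.sqrt_sq_eq_abs B).symm
    _ ≤ √(A * C) := Real.sqrt_le_sqrt hB
    _ = √A * √C := Real.sqrt_mul' A hC

theorem eqOn_deriv_of_eqOn_Icc {a b : ℝ} (hab : a < b) {f g f' g' : ℝ → ℂ}
    (hf : ∀ x ∈ Icc a b, HasDerivWithinAt f (f' x) (Icc a b) x)
    (hg : ∀ x ∈ Icc a b, HasDerivWithinAt g (g' x) (Icc a b) x)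
    (hfg : EqOn f g (Icc a b)) : EqOn f' g' (Icc a b) := fun x hx =>
  (uniqueDiffOn_Icc hab x hx).eq_deriv _ (hf x hx) ((hg x hx).congr (fun _ hy => hfg hy) (hfg hx))

theorem integral_re_mul_conj_green {ℓ : ℝ} (hℓ : 0 ≤ ℓ) {u2 u3 u4 v v1 v2 : ℝ → ℂ}
    (hu3 : ∀ x ∈ Icc 0 ℓ, HasDerivWithinAt u2 (u3 x) (Icc 0 ℓ) x)
    (hu4 : ∀ x ∈ Icc 0 ℓ, HasDerivWithinAt u3 (u4 x) (Icc 0 ℓ) x)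
    (hv1 : ∀ x ∈ Icc 0 ℓ, HasDerivWithinAt v (v1 x) (Icc 0 ℓ) x)
    (hv2 : ∀ x ∈ Icc 0 ℓ, HasDerivWithinAt v1 (v2 x) (Icc 0 ℓ) x)
    (hu4c : ContinuousOn u4 (Icc 0 ℓ)) (hv2c : ContinuousOn v2 (Icc 0 ℓ))
    (hvℓ : v ℓ = 0) (hv1ℓ : v1 ℓ = 0) :
    ∫ x in (0:ℝ)..ℓ, (u4 x * conj (v x) - u2 x * conj (v2 x)).re
      = -(u3 0 * conj (v 0) - u2 0 * conj (v1 0)).re := by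
  have hderiv : ∀ x ∈ Icc 0 ℓ, HasDerivWithinAt (fun y => u3 y * conj (v y) - u2 y * conj (v1 y))
      (u4 x * conj (v x) - u2 x * conj (v2 x)) (Icc 0 ℓ) x := fun x hx =>
    (((hu4 x hx).mul (hv1 x hx).star).sub ((hu3 x hx).mul (hv2 x hx).star)).congr_deriv
      (by simp only [Complex.star_def]; ring)
  have hcont : ContinuousOn (fun x => u4 x * conj (v x) - u2 x * conj (v2 x)) (uIcc 0 ℓ) := by
    have hvc : ContinuousOn v (Icc 0 ℓ) := fun x hx => (hv1 x hx).continuousWithinAt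
    have hu2c : ContinuousOn u2 (Icc 0 ℓ) := fun x hx => (hu3 x hx).continuousWithinAt
    rw [uIcc_of_le hℓ]
    exact (hu4c.mul hvc.star).sub (hu2c.mul hv2c.star)
  have hre := intervalIntegral.intervalIntegral_re hcont.intervalIntegrable (μ := volume)
  simp only [RCLike.re_to_complex] at hre
  rw [hre, intervalIntegral.integral_eq_sub_of_hasDerivAt_of_le hℓ
    (fun x hx => (hderiv x hx).continuousWithinAt)
    (fun x hx => (hderiv x (Ioo_subset_Icc_self hx)).hasDerivAt (Icc_mem_nhds hx.1 hx.2))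
    hcont.intervalIntegrable, hvℓ, hv1ℓ]
  simp

-- A state `(v, u'', w, z)` of the beam with tip body: the energy norm sees `u` only through `u''`.
structure BeamState where
  vel : ℝ → ℂ
  curv : ℝ → ℂ
  w : ℂ
  z : ℂ

namespace BeamState

instance : Add BeamState :=
  ⟨fun X Y => ⟨X.vel + Y.vel, X.curv + Y.curv, X.w + Y.w, X.z + Y.z⟩⟩

instance : SMul ℝ BeamState :=
  ⟨fun t X => ⟨fun x => t * X.vel x, fun x => t * X.curv x, t * X.w, t * X.z⟩⟩

protected def ContinuousOn (X : BeamState) (s : Set ℝ) : Prop :=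
  ContinuousOn X.vel s ∧ ContinuousOn X.curv s

def energyDensity (α : ℝ) (X Y : BeamState) (x : ℝ) : ℝ :=
  (X.vel x * conj (Y.vel x) + α * (X.curv x * conj (Y.curv x))).re

noncomputable def energyInner (ℓ α m d J : ℝ) (X Y : BeamState) : ℝ :=
  (∫ x in (0:ℝ)..ℓ, energyDensity α X Y x) +
    ((m * X.w + m * d * X.z) * conj Y.w + (m * d * X.w + (J + m * d ^ 2) * X.z) * conj Y.z).re

theorem energyInner_self (ℓ α m d J : ℝ) (X : BeamState) :
    energyInner ℓ α m d J X X = (∫ x in (0:ℝ)..ℓ, (‖X.vel x‖ ^ 2 + α * ‖X.curv x‖ ^ 2)) +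
      m * ‖X.w‖ ^ 2 + 2 * m * d * (X.w * conj X.z).re + (J + m * d ^ 2) * ‖X.z‖ ^ 2 := by
  have hdensity : ∀ x, energyDensity α X X x = ‖X.vel x‖ ^ 2 + α * ‖X.curv x‖ ^ 2 := by
    intro x
    simp only [energyDensity, Complex.mul_conj, Complex.normSq_eq_norm_sq, Complex.add_re,
      Complex.ofReal_re, Complex.mul_re, Complex.ofReal_im, mul_zero, sub_zero]
  simp only [energyInner, hdensity, Complex.sq_norm, Complex.normSq_apply, Complex.mul_re,
    Complex.add_re, Complex.mul_im, Complex.add_im, Complex.conj_re, Complex.conj_im,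
    Complex.ofReal_re, Complex.ofReal_im, ← Complex.ofReal_pow]
  ring

theorem energyInner_self_nonneg {ℓ α m J : ℝ} (hℓ : 0 ≤ ℓ) (hα : 0 ≤ α) (hm : 0 ≤ m)
    (hJ : 0 ≤ J) (d : ℝ) (X : BeamState) : 0 ≤ energyInner ℓ α m d J X X := by
  have htip : m * ‖X.w‖ ^ 2 + 2 * m * d * (X.w * conj X.z).re + (J + m * d ^ 2) * ‖X.z‖ ^ 2
      = m * ‖X.w + d * X.z‖ ^ 2 + J * ‖X.z‖ ^ 2 := by
    simp only [Complex.sq_norm, Complex.normSq_apply, Complex.mul_re, Complex.add_re,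
      Complex.add_im, Complex.mul_im, Complex.conj_re, Complex.conj_im, Complex.ofReal_re,
      Complex.ofReal_im]
    ring
  have hint : 0 ≤ ∫ x in (0:ℝ)..ℓ, (‖X.vel x‖ ^ 2 + α * ‖X.curv x‖ ^ 2) :=
    intervalIntegral.integral_nonneg hℓ fun x _ => by positivity
  have hnorms : 0 ≤ m * ‖X.w + d * X.z‖ ^ 2 + J * ‖X.z‖ ^ 2 := by positivity
  rw [energyInner_self]
  linarith

theorem energyDensity_smul_add_self (α t : ℝ) (X Y : BeamState) (x : ℝ) :
    energyDensity α (t • X + Y) (t • X + Y) x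
      = t ^ 2 * energyDensity α X X x + 2 * t * energyDensity α X Y x + energyDensity α Y Y x := by
  change ((t * X.vel x + Y.vel x) * conj (t * X.vel x + Y.vel x) +
    α * ((t * X.curv x + Y.curv x) * conj (t * X.curv x + Y.curv x))).re = _
  simp only [energyDensity, Complex.mul_re, Complex.add_re, Complex.add_im, Complex.mul_im,
    Complex.conj_re, Complex.conj_im, Complex.ofReal_re, Complex.ofReal_im, map_add, map_mul,
    Complex.conj_ofReal]
  ring

theorem intervalIntegrable_energyDensity {ℓ : ℝ} (α : ℝ) {X Y : BeamState}
    (hX : X.ContinuousOn (uIcc 0 ℓ)) (hY : Y.ContinuousOn (uIcc 0 ℓ)) :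
    IntervalIntegrable (energyDensity α X Y) volume 0 ℓ :=
  ContinuousOn.intervalIntegrable <| Complex.continuous_re.comp_continuousOn <|
    (hX.1.mul hY.1.star).add (continuousOn_const.mul (hX.2.mul hY.2.star))

theorem energyInner_smul_add_self (ℓ α m d J t : ℝ) {X Y : BeamState}
    (hX : X.ContinuousOn (uIcc 0 ℓ)) (hY : Y.ContinuousOn (uIcc 0 ℓ)) :
    energyInner ℓ α m d J (t • X + Y) (t • X + Y) = t ^ 2 * energyInner ℓ α m d J X X
      + 2 * t * energyInner ℓ α m d J X Y + energyInner ℓ α m d J Y Y := by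
  have hXX := intervalIntegrable_energyDensity α hX hX
  have hXY := intervalIntegrable_energyDensity α hX hY
  have hYY := intervalIntegrable_energyDensity α hY hY
  have hintegral : ∫ x in (0:ℝ)..ℓ, energyDensity α (t • X + Y) (t • X + Y) x
      = t ^ 2 * (∫ x in (0:ℝ)..ℓ, energyDensity α X X x)
        + 2 * t * (∫ x in (0:ℝ)..ℓ, energyDensity α X Y x)
        + ∫ x in (0:ℝ)..ℓ, energyDensity α Y Y x := by
    simp only [energyDensity_smul_add_self]
    rw [intervalIntegral.integral_add ((hXX.const_mul _).add (hXY.const_mul _)) hYY,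
      intervalIntegral.integral_add (hXX.const_mul _) (hXY.const_mul _),
      intervalIntegral.integral_const_mul, intervalIntegral.integral_const_mul]
  change (∫ x in (0:ℝ)..ℓ, energyDensity α (t • X + Y) (t • X + Y) x) +
    ((m * (t * X.w + Y.w) + m * d * (t * X.z + Y.z)) * conj (t * X.w + Y.w) +
      (m * d * (t * X.w + Y.w) + (J + m * d ^ 2) * (t * X.z + Y.z)) * conj (t * X.z + Y.z)).re = _
  rw [hintegral]
  simp only [energyInner, Complex.mul_re, Complex.add_re, Complex.add_im, Complex.mul_im,
    Complex.conj_re, Complex.conj_im, Complex.ofReal_re, Complex.ofReal_im, map_add, map_mul,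
    Complex.conj_ofReal, ← Complex.ofReal_pow]
  ring

theorem energyInner_le_sqrt_mul_sqrt {ℓ α m J : ℝ} (hℓ : 0 ≤ ℓ) (hα : 0 ≤ α) (hm : 0 ≤ m)
    (hJ : 0 ≤ J) (d : ℝ) {X Y : BeamState}
    (hX : X.ContinuousOn (uIcc 0 ℓ)) (hY : Y.ContinuousOn (uIcc 0 ℓ)) :
    energyInner ℓ α m d J X Y
      ≤ √(energyInner ℓ α m d J X X) * √(energyInner ℓ α m d J Y Y) :=
  le_sqrt_mul_sqrt_of_forall_quadratic_nonneg fun t => by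
    have := energyInner_self_nonneg hℓ hα hm hJ d (t • X + Y)
    rw [energyInner_smul_add_self ℓ α m d J t hX hY] at this
    linarith

end BeamState

theorem min_mul_le_tip_dissipation {d γ γs : ℝ} (hd : 0 < d) (hγ : 0 < γ)
    (hyp : d * γ ≤ 2 * γs) (w z : ℂ) :
    min (γ / 4) (d * γs / 3) * (‖w‖ ^ 2 + ‖z‖ ^ 2)
      ≤ γ * ‖w‖ ^ 2 + d * γ * (w * conj z).re + d * γs * ‖z‖ ^ 2 := by
  have hre : -(‖w‖ * ‖z‖) ≤ (w * conj z).re := by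
    have := Complex.abs_re_le_norm (w * conj z)
    rw [norm_mul, Complex.norm_conj] at this
    linarith [neg_abs_le (w * conj z).re]
  -- AM-GM: `d γ ‖w‖ ‖z‖ ≤ (3/4) γ ‖w‖² + (d² γ / 3) ‖z‖²`, and `d² γ / 3 ≤ (2/3) d γs`.
  nlinarith [mul_le_mul_of_nonneg_left hre (by positivity : (0:ℝ) ≤ d * γ),
    mul_nonneg hγ.le (sq_nonneg (3 * ‖w‖ - 2 * d * ‖z‖)),
    mul_nonneg (mul_nonneg hd.le (sub_nonneg.2 hyp)) (sq_nonneg ‖z‖),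
    mul_le_mul_of_nonneg_right (min_le_left (γ / 4) (d * γs / 3)) (sq_nonneg ‖w‖),
    mul_le_mul_of_nonneg_right (min_le_right (γ / 4) (d * γs / 3)) (sq_nonneg ‖z‖)]

namespace ResolventSol

open BeamState

variable (R : ResolventSol ℓ α m d J γ γs)

def stateU : BeamState := ⟨R.v, R.u2, R.v 0, R.v1 0⟩

def stateF : BeamState := ⟨R.f2, R.f1dd, R.f41, R.f42⟩

theorem normU_eq_sqrt_energyInner : normU R = √(energyInner ℓ α m d J R.stateU R.stateU) := by
  rw [energyInner_self]; rfl

theorem normF_eq_sqrt_energyInner : normF R = √(energyInner ℓ α m d J R.stateF R.stateF) := by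
  rw [energyInner_self]; rfl

theorem continuousOn_stateU : R.stateU.ContinuousOn (Icc 0 ℓ) :=
  ⟨fun x hx => (R.hv1 x hx).continuousWithinAt, fun x hx => (R.hu3 x hx).continuousWithinAt⟩

theorem continuousOn_stateF : R.stateF.ContinuousOn (Icc 0 ℓ) := ⟨R.hf2c, R.hf1c⟩

theorem f1dd_eqOn (hℓ : 0 < ℓ) :
    EqOn R.f1dd (fun x => Complex.I * R.lam * R.u2 x - R.v2 x) (Icc 0 ℓ) := by
  have hf1d : EqOn R.f1d (fun x => Complex.I * R.lam * R.u1 x - R.v1 x) (Icc 0 ℓ) :=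
    eqOn_deriv_of_eqOn_Icc hℓ R.hf11
      (fun x hx => ((R.hu1 x hx).const_mul _).sub (R.hv1 x hx)) fun x hx => (R.res1 x hx).symm
  exact eqOn_deriv_of_eqOn_Icc hℓ R.hf12
    (fun x hx => ((R.hu2 x hx).const_mul _).sub (R.hv2 x hx)) hf1d

theorem energyInner_stateF_stateU (hℓ : 0 < ℓ) :
    energyInner ℓ α m d J R.stateF R.stateU
      = γ * ‖R.v 0‖ ^ 2 + d * γ * (R.v 0 * conj (R.v1 0)).re + d * γs * ‖R.v1 0‖ ^ 2 := by
  -- In the beam and in the tip equations the `iλ` terms pair to purely imaginary numbers, and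
  -- the boundary terms of the Green formula cancel the `α u'''(0)`, `α u''(0)` of the tip.
  have hdensity : EqOn (energyDensity α R.stateF R.stateU)
      (fun x => α * (R.u4 x * conj (R.v x) - R.u2 x * conj (R.v2 x)).re) (uIcc 0 ℓ) := by
    intro x hx
    rw [uIcc_of_le hℓ.le] at hx
    change (R.f2 x * conj (R.v x) + α * (R.f1dd x * conj (R.u2 x))).re = _
    rw [← R.res2 x hx, R.f1dd_eqOn hℓ hx]
    simp only [Complex.mul_re, Complex.add_re, Complex.sub_re, Complex.mul_im, Complex.add_im,
      Complex.sub_im, Complex.I_re, Complex.I_im, Complex.ofReal_re, Complex.ofReal_im,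
      Complex.conj_re, Complex.conj_im]
    ring
  have hgreen := integral_re_mul_conj_green hℓ.le R.hu3 R.hu4 R.hv1 R.hv2 R.hu4c R.hv2c
    R.bcv R.bcv1
  have htip := congrArg (fun c => (c * conj (R.v 0)).re) R.res3
  have htip' := congrArg (fun c => (c * conj (R.v1 0)).re) R.res4
  rw [energyInner, intervalIntegral.integral_congr hdensity, intervalIntegral.integral_const_mul,
    hgreen]
  dsimp only [stateF, stateU]
  simp only [Complex.mul_re, Complex.add_re, Complex.sub_re, Complex.mul_im,
    Complex.add_im, Complex.sub_im, Complex.I_re, Complex.I_im, Complex.ofReal_re,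
    Complex.ofReal_im, Complex.conj_re, Complex.conj_im, Complex.sq_norm, Complex.normSq_apply,
    ← Complex.ofReal_pow] at htip htip' ⊢
  linarith

end ResolventSol

/-- Basic dissipation estimate for the resolvent system: `|w|² + |z|² ≤ c ‖F‖ ‖U‖`. -/
theorem resolvent_tip_estimate (ℓ α m d J γ γs : ℝ)
    (hℓ : 0 < ℓ) (hα : 0 < α) (hm : 0 < m) (hd : 0 < d) (hJ : 0 < J)
    (hγ : 0 < γ) (hγs : 0 < γs) (hyp : d * γ ≤ 2 * γs) :
    ∃ c > 0, ∀ R : ResolventSol ℓ α m d J γ γs,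
      ‖R.v 0‖ ^ 2 + ‖R.v1 0‖ ^ 2 ≤ c * normF R * normU R := by
  have hε : 0 < min (γ / 4) (d * γs / 3) := lt_min (by positivity) (by positivity)
  refine ⟨(min (γ / 4) (d * γs / 3))⁻¹, inv_pos.2 hε, fun R => ?_⟩
  have hcs := BeamState.energyInner_le_sqrt_mul_sqrt hℓ.le hα.le hm.le hJ.le d
    (uIcc_of_le hℓ.le ▸ R.continuousOn_stateF) (uIcc_of_le hℓ.le ▸ R.continuousOn_stateU)
  rw [R.energyInner_stateF_stateU hℓ, ← R.normF_eq_sqrt_energyInner,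
    ← R.normU_eq_sqrt_energyInner] at hcs
  rw [mul_assoc, le_inv_mul_iff₀ hε]
  exact (min_mul_le_tip_dissipation hd hγ hyp _ _).trans hcs
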